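/- If E is a trivial essential facing of a tuple A of polytopes (i.e., E is an essential subtuple of A itself realizing min dim A), then dim E = min dim A; if E is a nontrivial essential facing (the maximal essential subtuple of a proper face B of A, not a subtuple of A), then dim E < min dim A. -/

import Mathlib

open Pointwise MeasureTheory Metric

noncomputable section

/-- Ambient Euclidean space `ℝⁿ`. -/
abbrev V (n : ℕ) : Type := EuclideanSpace ℝ (Fin n)

/-- Dimension of (the affine span of) a subset of `ℝⁿ`. -/
def affDim {n : ℕ} (s : Set (V n)) : ℕ := Module.finrank ℝ (vectorSpan ℝ s)

/-- A (compact convex) polytope: the convex hull of a nonempty finite set. -/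
def IsPolytope {n : ℕ} (P : Set (V n)) : Prop :=
  ∃ F : Finset (V n), F.Nonempty ∧ P = convexHull ℝ (F : Set (V n))

/-- `dim AJ = dim (∑_{j ∈ J} A j) − |J|` for a tuple of polytopes; the empty
Minkowski sum is `{0}` (the `0` of the pointwise monoid on sets). -/
def tdim {n : ℕ} {K : Type} [Fintype K] (A : K → Set (V n)) (J : Finset K) : ℤ :=
  (affDim (∑ j ∈ J, A j) : ℤ) - J.card


open scoped RealInnerProductSpace

/-- The support face `Δ^γ` of `Δ` for a covector `γ` (identified with a vector via the
Euclidean structure): the face where `⟪γ, ·⟫` attains its maximum. -/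
def suppFaceV {n : ℕ} (g : V n) (Δ : Set (V n)) : Set (V n) :=
  {x ∈ Δ | ∀ y ∈ Δ, ⟪g, y⟫ ≤ ⟪g, x⟫}

/-- `F` is a face of the polytope `Δ` (the support face of some covector; `γ = 0`
gives `Δ` itself). -/
def IsFaceOfP {n : ℕ} (F Δ : Set (V n)) : Prop :=
  ∃ g : V n, F = suppFaceV g Δ

/-- A tuple `B` is a face of the tuple `A`: each `B i` is a face of `A i` and `∑ B`
is a face of `∑ A`. -/
def TupleFace {n : ℕ} {K : Type} [Fintype K] (B A : K → Set (V n)) : Prop :=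
  (∀ i, IsFaceOfP (B i) (A i)) ∧ IsFaceOfP (∑ i, B i) (∑ i, A i)

/-- A subtuple `AJ` is essential if `dim AJ` is the minimum of `dim` over all
subtuples, and every proper subtuple has strictly bigger `dim`. -/
def Essential {n : ℕ} {K : Type} [Fintype K] (A : K → Set (V n)) (J : Finset K) : Prop :=
  IsLeast (Set.range (tdim A)) (tdim A J) ∧ ∀ I : Finset K, I ⊂ J → tdim A J < tdim A I

/-- `AI` is the maximal essential subtuple of `A`. -/
def MaxEssentialSub {n : ℕ} {K : Type} [Fintype K] (A : K → Set (V n)) (I : Finset K) :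
    Prop :=
  Essential A I ∧ ∀ J : Finset K, Essential A J → J ⊆ I

/-
The total face `∑ B` is the support face of `∑ A` in a single direction `γ`. Support faces of
Minkowski sums are sums of support faces, and Minkowski sums of compact convex sets cancel, so
every `B i` is the `γ`-face of `A i`. Hence `∑ BJ` is the `γ`-face of `∑ AJ` for every `J`, and
`dim BJ ≤ dim AJ`, strictly when `B i ≠ A i` for some `i ∈ J`. Thus
`dim BI = min dim B ≤ min dim A`, with equality for a trivial facing. For a nontrivial one,
equality would make any `J` realizing `min dim A` realize `min dim B` as well; submodularity of
`J ↦ dim (∑ BJ)` then puts the essential `I` inside `J`, and a proper `B i` with `i ∈ I` gives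
`dim BJ < dim AJ = min dim A`.
-/

theorem Set.finsetSum_nonempty {ι M : Type*} [AddCommMonoid M] {J : Finset ι} {S : ι → Set M}
    (hS : ∀ j ∈ J, (S j).Nonempty) : (∑ j ∈ J, S j).Nonempty := by
  choose! x hx using hS
  exact ⟨∑ j ∈ J, x j, Set.finsetSum_mem_finsetSum _ _ _ hx⟩

section VectorSpan

variable {k E : Type*} [Ring k] [AddCommGroup E] [Module k E]

theorem vectorSpan_add {s t : Set E} (hs : s.Nonempty) (ht : t.Nonempty) :
    vectorSpan k (s + t) = vectorSpan k s ⊔ vectorSpan k t := by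
  apply le_antisymm
  · rw [vectorSpan_def, Submodule.span_le]
    rintro _ ⟨_, ⟨a, ha, b, hb, rfl⟩, _, ⟨a', ha', b', hb', rfl⟩, rfl⟩
    simp only [SetLike.mem_coe, vsub_eq_sub, add_sub_add_comm]
    exact Submodule.add_mem_sup (vsub_mem_vectorSpan k ha ha') (vsub_mem_vectorSpan k hb hb')
  · obtain ⟨a, ha⟩ := hs
    obtain ⟨b, hb⟩ := ht
    refine sup_le ?_ ?_
    · rw [← vectorSpan_vadd k s b]
      refine vectorSpan_mono k ?_
      rintro _ ⟨x, hx, rfl⟩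
      exact ⟨x, hx, b, hb, add_comm x b⟩
    · rw [← vectorSpan_vadd k t a]
      refine vectorSpan_mono k ?_
      rintro _ ⟨x, hx, rfl⟩
      exact ⟨a, ha, x, hx, rfl⟩

theorem vectorSpan_finsetSum {ι : Type*} (J : Finset ι) {S : ι → Set E}
    (hS : ∀ j ∈ J, (S j).Nonempty) :
    vectorSpan k (∑ j ∈ J, S j) = J.sup fun j => vectorSpan k (S j) := by
  induction J using Finset.cons_induction with
  | empty => simp [← Set.singleton_zero]
  | cons i J hi ih =>
    rw [Finset.sum_cons, Finset.sup_cons,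
      vectorSpan_add (hS i (J.mem_cons_self i))
        (Set.finsetSum_nonempty fun j hj => hS j (Finset.mem_cons_of_mem hj)),
      ih fun j hj => hS j (Finset.mem_cons_of_mem hj)]

end VectorSpan

namespace ContinuousLinearMap

variable {E : Type*} [AddCommGroup E] [TopologicalSpace E] [Module ℝ E] (l : StrongDual ℝ E)

theorem toExposed_nonempty {s : Set E} (hs : IsCompact s) (hne : s.Nonempty) :
    (l.toExposed s).Nonempty := by
  obtain ⟨x, hx, hmax⟩ := hs.exists_isMaxOn hne l.continuous.continuousOn
  exact ⟨x, hx, fun y hy => hmax hy⟩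

theorem mem_toExposed_of_add_mem {s t : Set E} {a b : E} (ha : a ∈ s) (hb : b ∈ t)
    (h : a + b ∈ l.toExposed (s + t)) : a ∈ l.toExposed s :=
  ⟨ha, fun y hy => by simpa using h.2 (y + b) (Set.add_mem_add hy hb)⟩

theorem toExposed_add (s t : Set E) : l.toExposed (s + t) = l.toExposed s + l.toExposed t := by
  apply subset_antisymm
  · rintro _ h
    obtain ⟨a, ha, b, hb, rfl⟩ := h.1
    refine Set.add_mem_add (l.mem_toExposed_of_add_mem ha hb h)
      (l.mem_toExposed_of_add_mem hb ha ?_)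
    rwa [add_comm b, add_comm t]
  · rintro _ ⟨a, ha, b, hb, rfl⟩
    refine ⟨Set.add_mem_add ha.1 hb.1, ?_⟩
    rintro _ ⟨a', ha', b', hb', rfl⟩
    rw [map_add, map_add]
    exact add_le_add (ha.2 a' ha') (hb.2 b' hb')

theorem toExposed_zero : l.toExposed (0 : Set E) = 0 := by
  ext x
  simp +contextual [toExposed, ← Set.singleton_zero]

theorem toExposed_finsetSum {ι : Type*} (J : Finset ι) (S : ι → Set E) :
    l.toExposed (∑ j ∈ J, S j) = ∑ j ∈ J, l.toExposed (S j) := by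
  induction J using Finset.cons_induction with
  | empty => exact l.toExposed_zero
  | cons i J hi ih => rw [Finset.sum_cons, Finset.sum_cons, toExposed_add, ih]

theorem subset_toExposed_of_finsetSum_eq {ι : Type*} {J : Finset ι} {S T : ι → Set E}
    (hS : ∀ j ∈ J, (S j).Nonempty) (hST : ∀ j ∈ J, S j ⊆ T j)
    (h : ∑ j ∈ J, S j = l.toExposed (∑ j ∈ J, T j)) {i : ι} (hi : i ∈ J) :
    S i ⊆ l.toExposed (T i) := by
  classical
  intro a ha
  obtain ⟨b, hb⟩ := Set.finsetSum_nonempty fun j hj => hS j (Finset.mem_of_mem_erase hj)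
  rw [← Finset.add_sum_erase J _ hi, ← Finset.add_sum_erase J _ hi] at h
  refine l.mem_toExposed_of_add_mem (hST i hi ha) ?_ (h ▸ Set.add_mem_add ha hb)
  exact Set.finsetSum_subset_finsetSum _ _ _ (fun j hj => hST j (Finset.mem_of_mem_erase hj)) hb

theorem vectorSpan_toExposed_lt {s : Set E} (hne : (l.toExposed s).Nonempty)
    (hs : l.toExposed s ≠ s) : vectorSpan ℝ (l.toExposed s) < vectorSpan ℝ s := by
  obtain ⟨x, hx⟩ := hne
  obtain ⟨y, hy, hyx⟩ : ∃ y ∈ s, l y < l x := by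
    by_contra! h
    exact hs (subset_antisymm (fun _ hz => hz.1)
      fun z hz => ⟨hz, fun w hw => (hx.2 w hw).trans (h z hz)⟩)
  have hker : vectorSpan ℝ (l.toExposed s) ≤ LinearMap.ker (l : E →ₗ[ℝ] ℝ) := by
    rw [vectorSpan_def, Submodule.span_le]
    rintro _ ⟨a, ha, b, hb, rfl⟩
    simp [le_antisymm (hb.2 a ha.1) (ha.2 b hb.1)]
  refine SetLike.lt_iff_le_and_exists.2 ⟨vectorSpan_mono ℝ fun _ hz => hz.1,
    y -ᵥ x, vsub_mem_vectorSpan ℝ hy hx.1, fun hmem => ?_⟩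
  have := hker hmem
  simp only [LinearMap.mem_ker, coe_coe, vsub_eq_sub, map_sub, sub_eq_zero] at this
  exact hyx.ne this

end ContinuousLinearMap

section Cancellation

variable {E : Type*} [AddCommGroup E] [TopologicalSpace E] [IsTopologicalAddGroup E] [Module ℝ E]
  [ContinuousSMul ℝ E] [LocallyConvexSpace ℝ E] {ι : Type*}

/-- A point of `T i \ S i` separated from `S i` by `f` would make `∑ S` fall short of `∑ T` in
the direction `f`. -/
theorem eq_of_subset_of_finsetSum_eq {J : Finset ι} {S T : ι → Set E}
    (hST : ∀ j ∈ J, S j ⊆ T j) (hS_convex : ∀ j ∈ J, Convex ℝ (S j))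
    (hS_closed : ∀ j ∈ J, IsClosed (S j)) (hT_compact : ∀ j ∈ J, IsCompact (T j))
    (hT_ne : ∀ j ∈ J, (T j).Nonempty) (h : ∑ j ∈ J, S j = ∑ j ∈ J, T j) {i : ι} (hi : i ∈ J) :
    S i = T i := by
  refine (hST i hi).antisymm fun p hp => ?_
  by_contra hpS
  obtain ⟨f, u, hfS, hfp⟩ :=
    geometric_hahn_banach_closed_point (hS_convex i hi) (hS_closed i hi) hpS
  choose! y hy using fun j hj => f.toExposed_nonempty (hT_compact j hj) (hT_ne j hj)
  obtain ⟨x, hx, hxy⟩ := (Set.mem_finsetSum J S _).1 <|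
    h ▸ Set.finsetSum_mem_finsetSum J T y fun j hj => (hy j hj).1
  have hlt : ∑ j ∈ J, f (x j) < ∑ j ∈ J, f (y j) := by
    refine Finset.sum_lt_sum (fun j hj => (hy j hj).2 _ (hST j hj (hx hj))) ⟨i, hi, ?_⟩
    calc f (x i) < u := hfS _ (hx hi)
      _ < f p := hfp
      _ ≤ f (y i) := (hy i hi).2 p hp
  rw [← map_sum, ← map_sum, hxy] at hlt
  exact hlt.false

end Cancellation

section Polytope

variable {n : ℕ} {P F : Set (V n)}

theorem IsPolytope.isCompact (hP : IsPolytope P) : IsCompact P := by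
  obtain ⟨S, -, rfl⟩ := hP
  exact S.finite_toSet.isCompact_convexHull ℝ

theorem IsPolytope.convex (hP : IsPolytope P) : Convex ℝ P := by
  obtain ⟨S, -, rfl⟩ := hP
  exact convex_convexHull ℝ _

theorem IsPolytope.nonempty (hP : IsPolytope P) : P.Nonempty := by
  obtain ⟨S, hS, rfl⟩ := hP
  exact hS.to_set.convexHull

theorem IsFaceOfP.exists_eq_toExposed (hF : IsFaceOfP F P) :
    ∃ l : StrongDual ℝ (V n), F = l.toExposed P :=
  let ⟨g, hg⟩ := hF
  ⟨innerSL ℝ g, hg⟩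

theorem IsFaceOfP.isExposed (hF : IsFaceOfP F P) : IsExposed ℝ P F := by
  obtain ⟨l, rfl⟩ := hF.exists_eq_toExposed
  exact ContinuousLinearMap.toExposed.isExposed

theorem IsFaceOfP.nonempty (hF : IsFaceOfP F P) (hP : IsPolytope P) : F.Nonempty := by
  obtain ⟨l, rfl⟩ := hF.exists_eq_toExposed
  exact l.toExposed_nonempty hP.isCompact hP.nonempty

end Polytope

section Tdim

variable {n : ℕ} {K : Type} [Fintype K]

theorem affDim_mono {s t : Set (V n)} (h : s ⊆ t) : affDim s ≤ affDim t :=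
  Submodule.finrank_mono (vectorSpan_mono ℝ h)

theorem tdim_mono {A B : K → Set (V n)} {J : Finset K} (h : ∀ j ∈ J, B j ⊆ A j) :
    tdim B J ≤ tdim A J := by
  have := affDim_mono (Set.finsetSum_subset_finsetSum J _ _ h)
  unfold tdim
  omega

theorem tdim_union_add_tdim_inter_le [DecidableEq K] {S : K → Set (V n)}
    (hS : ∀ j, (S j).Nonempty) (I J : Finset K) :
    tdim S (I ∪ J) + tdim S (I ∩ J) ≤ tdim S I + tdim S J := by
  set W : K → Submodule ℝ (V n) := fun j => vectorSpan ℝ (S j)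
  have affDim_eq (L : Finset K) : affDim (∑ j ∈ L, S j) = Module.finrank ℝ ↥(L.sup W) :=
    congrArg (fun U : Submodule ℝ (V n) => Module.finrank ℝ U)
      (vectorSpan_finsetSum L fun j _ => hS j)
  have hinter : Module.finrank ℝ ↥((I ∩ J).sup W) ≤ Module.finrank ℝ ↥(I.sup W ⊓ J.sup W) :=
    Submodule.finrank_mono <| le_inf (Finset.sup_mono Finset.inter_subset_left)
      (Finset.sup_mono Finset.inter_subset_right)
  have hsup := Submodule.finrank_sup_add_finrank_inf_eq (I.sup W) (J.sup W)
  have hcard := Finset.card_union_add_card_inter I J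
  unfold tdim
  rw [affDim_eq, affDim_eq, affDim_eq, affDim_eq, Finset.sup_union]
  omega

theorem Essential.subset_of_tdim_le {S : K → Set (V n)} (hS : ∀ j, (S j).Nonempty)
    {I J : Finset K} (hI : Essential S I) (hJ : tdim S J ≤ tdim S I) : I ⊆ J := by
  classical
  have hunion : tdim S I ≤ tdim S (I ∪ J) := hI.1.2 ⟨I ∪ J, rfl⟩
  have hsub := tdim_union_add_tdim_inter_le hS I J
  by_contra hIJ
  have hlt := hI.2 (I ∩ J) (Finset.ssubset_iff_subset_ne.2 ⟨Finset.inter_subset_left,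
    fun h => hIJ (h ▸ Finset.inter_subset_right)⟩)
  omega

end Tdim

namespace TupleFace

variable {n : ℕ} {K : Type} [Fintype K] {A B : K → Set (V n)}

theorem subset (hB : TupleFace B A) (k : K) : B k ⊆ A k :=
  (hB.1 k).isExposed.subset

theorem exists_forall_eq_toExposed (hA : ∀ k, IsPolytope (A k)) (hB : TupleFace B A) :
    ∃ l : StrongDual ℝ (V n), ∀ k, B k = l.toExposed (A k) := by
  obtain ⟨l, hl⟩ := hB.2.exists_eq_toExposed
  refine ⟨l, fun k => eq_of_subset_of_finsetSum_eq (fun j _ => ?_) (fun j _ => ?_) (fun j _ => ?_)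
    (fun j _ => ?_) (fun j _ => ?_) (hl.trans (l.toExposed_finsetSum _ _)) (Finset.mem_univ k)⟩
  · exact l.subset_toExposed_of_finsetSum_eq (fun j _ => (hB.1 j).nonempty (hA j))
      (fun j _ => hB.subset j) hl (Finset.mem_univ j)
  · exact (hB.1 j).isExposed.convex (hA j).convex
  · exact (hB.1 j).isExposed.isClosed (hA j).isCompact.isClosed
  · exact ContinuousLinearMap.toExposed.isExposed.isCompact (hA j).isCompact
  · exact l.toExposed_nonempty (hA j).isCompact (hA j).nonempty

theorem tdim_lt (hA : ∀ k, IsPolytope (A k)) (hB : TupleFace B A) {J : Finset K} {i : K}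
    (hi : i ∈ J) (hBi : B i ≠ A i) : tdim B J < tdim A J := by
  obtain ⟨l, hl⟩ := hB.exists_forall_eq_toExposed hA
  have hsum : ∑ j ∈ J, B j = l.toExposed (∑ j ∈ J, A j) := by
    rw [l.toExposed_finsetSum]
    exact Finset.sum_congr rfl fun j _ => hl j
  have hproper : l.toExposed (∑ j ∈ J, A j) ≠ ∑ j ∈ J, A j := fun h =>
    hBi <| (hl i).trans <| eq_of_subset_of_finsetSum_eq
      (fun j _ => ContinuousLinearMap.toExposed.isExposed.subset)
      (fun j _ => ContinuousLinearMap.toExposed.isExposed.convex (hA j).convex)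
      (fun j _ => ContinuousLinearMap.toExposed.isExposed.isClosed (hA j).isCompact.isClosed)
      (fun j _ => (hA j).isCompact) (fun j _ => (hA j).nonempty)
      ((l.toExposed_finsetSum J A).symm.trans h) hi
  have hne : (l.toExposed (∑ j ∈ J, A j)).Nonempty :=
    hsum ▸ Set.finsetSum_nonempty fun j _ => (hB.1 j).nonempty (hA j)
  have hlt : affDim (∑ j ∈ J, B j) < affDim (∑ j ∈ J, A j) :=
    hsum ▸ Submodule.finrank_lt_finrank_of_lt (l.vectorSpan_toExposed_lt hne hproper)
  unfold tdim
  omega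

end TupleFace

theorem stmt15_general {n : ℕ} {K : Type} [Fintype K]
    (A : K → Set (V n)) (hA : ∀ k, IsPolytope (A k))
    (B : K → Set (V n)) (hB : TupleFace B A)
    (I : Finset K) (hmax : MaxEssentialSub B I)
    (m : ℤ) (hm : IsLeast (Set.range (tdim A)) m) :
    ((∀ i ∈ I, B i = A i) → tdim B I = m) ∧
    ((¬ ∀ i ∈ I, B i = A i) → tdim B I < m) := by
  obtain ⟨hBI, -⟩ := hmax
  obtain ⟨J, rfl⟩ := hm.1
  have hBJ : tdim B J ≤ tdim A J := tdim_mono fun j _ => hB.subset j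
  have hle : tdim B I ≤ tdim A J := (hBI.1.2 ⟨J, rfl⟩).trans hBJ
  refine ⟨fun h => hle.antisymm ?_, fun h => hle.lt_of_ne fun heq => ?_⟩
  · have hAI : tdim B I = tdim A I := by
      unfold tdim
      rw [Finset.sum_congr rfl h]
    exact hAI ▸ hm.2 ⟨I, rfl⟩
  · obtain ⟨i, hi, hBi⟩ : ∃ i ∈ I, B i ≠ A i := by simpa using h
    have hIJ : I ⊆ J :=
      hBI.subset_of_tdim_le (fun k => (hB.1 k).nonempty (hA k)) (heq ▸ hBJ)
    exact (hB.tdim_lt hA (hIJ hi) hBi).not_ge (heq ▸ hBI.1.2 ⟨J, rfl⟩)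

/-- Lemma 2.14: an essential facing of `A` (the maximal essential subtuple `BI` of a
face `B ≺ A`) has `dim` equal to `min dim A` if it is trivial (a subtuple of `A`
itself), and `dim` strictly less than `min dim A` otherwise. -/
theorem stmt15 {n : ℕ} {K : Type} [Fintype K] [DecidableEq K]
    (A : K → Set (V n)) (hA : ∀ k, IsPolytope (A k))
    (B : K → Set (V n)) (hB : TupleFace B A)
    (I : Finset K) (hmax : MaxEssentialSub B I)
    (m : ℤ) (hm : IsLeast (Set.range (tdim A)) m) :
    ((∀ i ∈ I, B i = A i) → tdim B I = m) ∧
    ((¬ ∀ i ∈ I, B i = A i) → tdim B I < m) :=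
  stmt15_general A hA B hB I hmax m hm

end
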